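/- arXiv:2010.04213 — 4 statements merged into one kernel-verified Lean document; each statement's English description precedes it below -/
import Mathlib

section
/- Assume Σ is reachable from a ground state x* and controllable to x* (for every state x there exists a trajectory steering x* to x and a trajectory steering x to x*). Then Σ is cyclo-dissipative with respect to x* if and only if for every state x, every trajectory from x to x* with supply S₁, and every trajectory from x* to x with supply S₂, one has S₁ + S₂ ≥ 0 (equivalently, F_ac(x) := sup{−supply : trajectories from x to x*} ≤ F_rc(x) := inf{supply : trajectories from x* to x} for all x). -/
/-!
Gluing a trajectory from `xs` to `x` to one from `x` back to `xs` (after a time shift) gives a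
cycle at `xs` whose supply is the sum of the two supplies, so cyclo-dissipativity gives the
inequality. Conversely, a cycle at `xs` paired with itself is an admissible pair for `x = xs`,
so twice its supply is nonnegative.
-/

open MeasureTheory

structure Traj {n m : ℕ} (f : (Fin n → ℝ) → (Fin m → ℝ) → (Fin n → ℝ))
    (s : (Fin n → ℝ) → (Fin m → ℝ) → ℝ) where
  t₁ : ℝ
  t₂ : ℝ
  hle : t₁ ≤ t₂
  x : ℝ → Fin n → ℝ
  u : ℝ → Fin m → ℝ
  hu : Measurable u
  hx : Continuous x
  hf : IntervalIntegrable (fun t => f (x t) (u t)) volume t₁ t₂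
  hs : IntervalIntegrable (fun t => s (x t) (u t)) volume t₁ t₂
  hdyn : ∀ t ∈ Set.Icc t₁ t₂, x t = x t₁ + ∫ τ in t₁..t, f (x τ) (u τ)

noncomputable def Traj.supply {n m : ℕ} {f : (Fin n → ℝ) → (Fin m → ℝ) → (Fin n → ℝ)}
    {s : (Fin n → ℝ) → (Fin m → ℝ) → ℝ} (T : Traj f s) : ℝ :=
  ∫ t in T.t₁..T.t₂, s (T.x t) (T.u t)

def IsStorage {n m : ℕ} (f : (Fin n → ℝ) → (Fin m → ℝ) → (Fin n → ℝ))
    (s : (Fin n → ℝ) → (Fin m → ℝ) → ℝ) (F : (Fin n → ℝ) → ℝ) : Prop :=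
  ∀ T : Traj f s, F (T.x T.t₂) - F (T.x T.t₁) ≤ T.supply

def CycloDissipativeWrt {n m : ℕ} (f : (Fin n → ℝ) → (Fin m → ℝ) → (Fin n → ℝ))
    (s : (Fin n → ℝ) → (Fin m → ℝ) → ℝ) (xs : Fin n → ℝ) : Prop :=
  ∀ T : Traj f s, T.x T.t₁ = xs → T.x T.t₂ = xs → 0 ≤ T.supply

def Sac {n m : ℕ} (f : (Fin n → ℝ) → (Fin m → ℝ) → (Fin n → ℝ))
    (s : (Fin n → ℝ) → (Fin m → ℝ) → ℝ) (xs x : Fin n → ℝ) : Set ℝ :=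
  {r : ℝ | ∃ T : Traj f s, T.x T.t₁ = x ∧ T.x T.t₂ = xs ∧ r = -T.supply}

def Src {n m : ℕ} (f : (Fin n → ℝ) → (Fin m → ℝ) → (Fin n → ℝ))
    (s : (Fin n → ℝ) → (Fin m → ℝ) → ℝ) (xs x : Fin n → ℝ) : Set ℝ :=
  {r : ℝ | ∃ T : Traj f s, T.x T.t₁ = xs ∧ T.x T.t₂ = x ∧ r = T.supply}

open Set intervalIntegral

section IteLe

variable {α : Type*} {F G : ℝ → α} {a c t : ℝ}

theorem eqOn_ite_le_left (hac : a ≤ c) :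
    EqOn (fun τ => if τ ≤ c then F τ else G τ) F (uIoo a c) := fun τ hτ => by
  rw [uIoo_of_le hac] at hτ
  exact if_pos hτ.2.le

theorem eqOn_ite_le_right (hct : c ≤ t) :
    EqOn (fun τ => if τ ≤ c then F τ else G τ) G (uIoo c t) := fun τ hτ => by
  rw [uIoo_of_le hct] at hτ
  exact if_neg (not_le.2 hτ.1)

variable {E : Type*} [NormedAddCommGroup E] {F G : ℝ → E}

theorem IntervalIntegrable.ite_le (hac : a ≤ c) (hct : c ≤ t)
    (hF : IntervalIntegrable F volume a c) (hG : IntervalIntegrable G volume c t) :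
    IntervalIntegrable (fun τ => if τ ≤ c then F τ else G τ) volume a t :=
  (hF.congr_uIoo (eqOn_ite_le_left hac).symm).trans
    (hG.congr_uIoo (eqOn_ite_le_right hct).symm)

theorem integral_ite_le [NormedSpace ℝ E] (hac : a ≤ c) (hct : c ≤ t)
    (hF : IntervalIntegrable F volume a c) (hG : IntervalIntegrable G volume c t) :
    ∫ τ in a..t, (if τ ≤ c then F τ else G τ) =
      (∫ τ in a..c, F τ) + ∫ τ in c..t, G τ := by
  rw [← integral_add_adjacent_intervals (hF.congr_uIoo (eqOn_ite_le_left hac).symm)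
    (hG.congr_uIoo (eqOn_ite_le_right hct).symm),
    integral_congr_uIoo (eqOn_ite_le_left hac), integral_congr_uIoo (eqOn_ite_le_right hct)]

end IteLe

namespace Traj

variable {n m : ℕ} {f : (Fin n → ℝ) → (Fin m → ℝ) → (Fin n → ℝ)}
  {s : (Fin n → ℝ) → (Fin m → ℝ) → ℝ}

noncomputable def shift (T : Traj f s) (c : ℝ) : Traj f s where
  t₁ := T.t₁ - c
  t₂ := T.t₂ - c
  hle := sub_le_sub_right T.hle c
  x t := T.x (t + c)
  u t := T.u (t + c)
  hu := T.hu.comp (measurable_add_const c)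
  hx := T.hx.comp (continuous_add_const c)
  hf := T.hf.comp_add_right c
  hs := T.hs.comp_add_right c
  hdyn t ht := by
    rw [integral_comp_add_right (fun τ => f (T.x τ) (T.u τ)), sub_add_cancel]
    exact T.hdyn (t + c) ⟨sub_le_iff_le_add.1 ht.1, le_sub_iff_add_le.1 ht.2⟩

theorem shift_x_t₁ (T : Traj f s) (c : ℝ) : (T.shift c).x (T.shift c).t₁ = T.x T.t₁ :=
  congrArg T.x (sub_add_cancel _ _)

theorem shift_x_t₂ (T : Traj f s) (c : ℝ) : (T.shift c).x (T.shift c).t₂ = T.x T.t₂ :=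
  congrArg T.x (sub_add_cancel _ _)

theorem supply_shift (T : Traj f s) (c : ℝ) : (T.shift c).supply = T.supply := by
  change ∫ t in T.t₁ - c..T.t₂ - c, s (T.x (t + c)) (T.u (t + c)) = _
  rw [integral_comp_add_right (fun τ => s (T.x τ) (T.u τ)), sub_add_cancel, sub_add_cancel,
    supply]

noncomputable def concat (A B : Traj f s) (ht : A.t₂ = B.t₁) (hx : A.x A.t₂ = B.x B.t₁) :
    Traj f s where
  t₁ := A.t₁
  t₂ := B.t₂
  hle := A.hle.trans (ht ▸ B.hle)
  x t := if t ≤ A.t₂ then A.x t else B.x t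
  u t := if t ≤ A.t₂ then A.u t else B.u t
  hu := Measurable.ite measurableSet_Iic A.hu B.hu
  hx := Continuous.if_le A.hx B.hx continuous_id continuous_const fun _ h => by rw [h, hx, ht]
  hf := by
    simp only [apply_ite₂ f]
    exact A.hf.ite_le A.hle (ht ▸ B.hle) (ht ▸ B.hf)
  hs := by
    simp only [apply_ite₂ s]
    exact A.hs.ite_le A.hle (ht ▸ B.hle) (ht ▸ B.hs)
  hdyn t hmem := by
    simp only [if_pos A.hle, apply_ite₂ f]
    rcases le_or_gt t A.t₂ with htA | htA
    · rw [if_pos htA, A.hdyn t ⟨hmem.1, htA⟩]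
      refine congrArg _ (integral_congr fun τ hτ => ?_)
      rw [uIcc_of_le hmem.1] at hτ
      exact (if_pos (hτ.2.trans htA)).symm
    · have hBf : IntervalIntegrable (fun τ => f (B.x τ) (B.u τ)) volume A.t₂ t :=
        B.hf.mono_set <| by
          rw [uIcc_of_le htA.le, uIcc_of_le B.hle, ht]
          exact Icc_subset_Icc_right hmem.2
      rw [if_neg htA.not_ge, B.hdyn t ⟨ht ▸ htA.le, hmem.2⟩, ← hx, ← ht,
        integral_ite_le A.hle htA.le A.hf hBf, A.hdyn A.t₂ ⟨A.hle, le_rfl⟩, add_assoc]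

section Concat

variable (A B : Traj f s) (ht : A.t₂ = B.t₁) (hx : A.x A.t₂ = B.x B.t₁)

theorem concat_x_t₁ : (A.concat B ht hx).x (A.concat B ht hx).t₁ = A.x A.t₁ :=
  if_pos A.hle

theorem concat_x_t₂ : (A.concat B ht hx).x (A.concat B ht hx).t₂ = B.x B.t₂ := by
  change (if B.t₂ ≤ A.t₂ then A.x B.t₂ else B.x B.t₂) = _
  split_ifs with h
  · rw [le_antisymm h (ht ▸ B.hle), hx, ht]
  · rfl

theorem supply_concat : (A.concat B ht hx).supply = A.supply + B.supply := by
  change ∫ t in A.t₁..B.t₂, s (if t ≤ A.t₂ then A.x t else B.x t)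
    (if t ≤ A.t₂ then A.u t else B.u t) = _
  simp only [apply_ite₂ s]
  rw [integral_ite_le A.hle (ht ▸ B.hle) A.hs (ht ▸ B.hs), supply, supply, ht]

end Concat

theorem exists_concat (A B : Traj f s) (h : A.x A.t₂ = B.x B.t₁) :
    ∃ C : Traj f s, C.x C.t₁ = A.x A.t₁ ∧ C.x C.t₂ = B.x B.t₂ ∧
      C.supply = A.supply + B.supply := by
  set B' := B.shift (B.t₁ - A.t₂)
  have ht : A.t₂ = B'.t₁ := (sub_sub_cancel B.t₁ A.t₂).symm
  have hx : A.x A.t₂ = B'.x B'.t₁ := h.trans (B.shift_x_t₁ _).symm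
  exact ⟨A.concat B' ht hx, concat_x_t₁ A B' ht hx,
    (concat_x_t₂ A B' ht hx).trans (B.shift_x_t₂ _),
    (supply_concat A B' ht hx).trans (congrArg _ (B.supply_shift _))⟩

end Traj

theorem cycloDissipativeWrt_iff_general {n m : ℕ}
    (f : (Fin n → ℝ) → (Fin m → ℝ) → (Fin n → ℝ))
    (s : (Fin n → ℝ) → (Fin m → ℝ) → ℝ)
    (xs : Fin n → ℝ) :
    CycloDissipativeWrt f s xs ↔
      ∀ (x : Fin n → ℝ) (T₁ T₂ : Traj f s),
        T₁.x T₁.t₁ = x → T₁.x T₁.t₂ = xs →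
        T₂.x T₂.t₁ = xs → T₂.x T₂.t₂ = x →
        0 ≤ T₁.supply + T₂.supply := by
  constructor
  · intro hcd x T₁ T₂ h₁₁ h₁₂ h₂₁ h₂₂
    obtain ⟨C, hC₁, hC₂, hC⟩ := T₂.exists_concat T₁ (h₂₂.trans h₁₁.symm)
    have := hcd C (hC₁.trans h₂₁) (hC₂.trans h₁₂)
    linarith
  · intro h T hT₁ hT₂
    have := h xs T T hT₁ hT₂ hT₁ hT₂
    linarith

/-- Assuming reachability from and controllability to the ground state `xs`, the system is
cyclo-dissipative with respect to `xs` if and only if for every state `x`, every trajectory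
from `x` to `xs` and every trajectory from `xs` to `x` have supplies summing to a
nonnegative number. -/
theorem cycloDissipativeWrt_iff {n m : ℕ}
    (f : (Fin n → ℝ) → (Fin m → ℝ) → (Fin n → ℝ))
    (s : (Fin n → ℝ) → (Fin m → ℝ) → ℝ)
    (hfc : Continuous fun q : (Fin n → ℝ) × (Fin m → ℝ) => f q.1 q.2)
    (hsc : Continuous fun q : (Fin n → ℝ) × (Fin m → ℝ) => s q.1 q.2)
    (xs : Fin n → ℝ)
    (hreach : ∀ x : Fin n → ℝ, ∃ T : Traj f s, T.x T.t₁ = xs ∧ T.x T.t₂ = x)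
    (hctrl : ∀ x : Fin n → ℝ, ∃ T : Traj f s, T.x T.t₁ = x ∧ T.x T.t₂ = xs) :
    CycloDissipativeWrt f s xs ↔
      ∀ (x : Fin n → ℝ) (T₁ T₂ : Traj f s),
        T₁.x T₁.t₁ = x → T₁.x T₁.t₂ = xs →
        T₂.x T₂.t₁ = xs → T₂.x T₂.t₂ = x →
        0 ≤ T₁.supply + T₂.supply :=
  cycloDissipativeWrt_iff_general f s xs
end

section
/- Let f : ℝ^n × ℝ^m → ℝ^n be continuous and locally Lipschitz in its first argument, let h : ℝ^n × ℝ^m → ℝ^k be continuous, and let s : ℝ^m × ℝ^k → ℝ be a continuous supply rate. A continuously differentiable function F : ℝ^n → ℝ satisfies the dissipation inequality F(x(t₂)) − F(x(t₁)) ≤ ∫_{t₁}^{t₂} s(u(t), h(x(t),u(t))) dt along every smooth trajectory if and only if the differential dissipation inequality ⟨∇F(x), f(x,u)⟩ ≤ s(u, h(x,u)) holds for all (x,u) ∈ ℝ^n × ℝ^m; the same equivalence holds with both inequalities replaced by equalities. -/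
/-!
Along a trajectory, the chain rule and the fundamental theorem of calculus give
`F (x t₂) - F (x t₁) = ∫ ⟨∇F(x), f(x,u)⟩`, so the differential inequality (equality) integrates to
the integral one. Conversely, given `(x₀, u₀)`, apply the integral inequality on `[0, t]` to the
Picard–Lindelöf solution of `ẋ = f(x, u₀)` through `x₀`; comparing the two integrands as `t → 0⁺`
yields the pointwise inequality at `(x₀, u₀)`. Equalities are handled as two inequalities.
-/

open Set Metric Filter Topology
open scoped NNReal

theorem LocallyLipschitz.exists_eq_forall_mem_Ioo_hasDerivAt₀ {E : Type*}
    [NormedAddCommGroup E] [NormedSpace ℝ E] [CompleteSpace E] {v : E → E}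
    (hv : LocallyLipschitz v) (x₀ : E) :
    ∃ α : ℝ → E, α 0 = x₀ ∧ ∃ ε > (0 : ℝ), ∀ t ∈ Ioo (-ε) ε, HasDerivAt α (v (α t)) t := by
  obtain ⟨K, s, hs, hK⟩ := hv x₀
  set L : ℝ≥0 := ‖v x₀‖₊ + 1
  obtain ⟨a, ha, hball⟩ := nhds_basis_closedBall.eventually_iff.mp <| Eventually.and hs
    (hv.continuous.nnnorm.continuousAt.eventually (eventually_lt_nhds (lt_add_one ‖v x₀‖₊)))
  set ε : ℝ := a / L
  have hε : 0 < ε := by positivity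
  have hpl : IsPicardLindelof (fun _ ↦ v) (tmin := -ε) (tmax := ε)
      ⟨0, by simp [hε.le]⟩ x₀ ⟨a, ha.le⟩ 0 L K := by
    refine .of_time_independent (fun x hx ↦ (hball hx).2.le) (hK.mono fun x hx ↦ (hball hx).1) ?_
    have hL : (L : ℝ) ≠ 0 := by positivity
    simp only [ε, sub_zero, zero_sub, neg_neg, max_self, mul_div_cancel₀ _ hL, NNReal.coe_zero]
    exact le_refl a
  obtain ⟨α, hα₀, hα⟩ := hpl.exists_eq_forall_mem_Icc_hasDerivWithinAt₀
  exact ⟨α, hα₀, ε, hε, fun t ht ↦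
    (hα t (Ioo_subset_Icc_self ht)).hasDerivAt (Icc_mem_nhds ht.1 ht.2)⟩

theorem integral_fderiv_apply_eq_sub {E G : Type*} [NormedAddCommGroup E] [NormedSpace ℝ E]
    [NormedAddCommGroup G] [NormedSpace ℝ G] [CompleteSpace G] {F : E → G}
    (hF : ContDiff ℝ 1 F) {x x' : ℝ → E} {a b : ℝ}
    (hx : ∀ t ∈ uIcc a b, HasDerivAt x (x' t) t) (hx' : ContinuousOn x' (uIcc a b)) :
    ∫ t in a..b, fderiv ℝ F (x t) (x' t) = F (x b) - F (x a) :=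
  intervalIntegral.integral_eq_sub_of_hasDerivAt
    (fun t ht ↦ (hF.differentiable one_ne_zero (x t)).hasFDerivAt.comp_hasDerivAt t (hx t ht))
    (((hF.continuous_fderiv one_ne_zero).comp_continuousOn
      (HasDerivAt.continuousOn hx)).clm_apply hx').intervalIntegrable

theorem le_of_forall_integral_le_integral {a b : ℝ → ℝ} {t₀ t₁ : ℝ} (ht : t₀ < t₁)
    (ha : ContinuousOn a (Icc t₀ t₁)) (hb : ContinuousOn b (Icc t₀ t₁))
    (h : ∀ t ∈ Ioc t₀ t₁, ∫ τ in t₀..t, a τ ≤ ∫ τ in t₀..t, b τ) : a t₀ ≤ b t₀ := by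
  by_contra! hlt
  have hmem := left_mem_Icc.2 ht.le
  have hgt : ∀ᶠ t in 𝓝[≥] t₀, b t < a t := by
    rw [← nhdsWithin_Icc_eq_nhdsGE ht]
    exact (hb t₀ hmem).eventually_lt (ha t₀ hmem) hlt
  obtain ⟨t, ht₀t, hsub⟩ := mem_nhdsGE_iff_exists_Icc_subset.mp (hgt.and (Icc_mem_nhdsGE ht))
  have hIcc : Icc t₀ t ⊆ Icc t₀ t₁ := fun τ hτ ↦ (hsub hτ).2
  have hpos : 0 < ∫ τ in t₀..t, (a τ - b τ) :=
    intervalIntegral.intervalIntegral_pos_of_pos_on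
      (((ha.sub hb).mono hIcc).intervalIntegrable_of_Icc ht₀t.le)
      (fun τ hτ ↦ sub_pos.2 (hsub (Ioo_subset_Icc_self hτ)).1) ht₀t
  rw [intervalIntegral.integral_sub ((ha.mono hIcc).intervalIntegrable_of_Icc ht₀t.le)
    ((hb.mono hIcc).intervalIntegrable_of_Icc ht₀t.le)] at hpos
  linarith [h t ⟨ht₀t, (hsub ⟨ht₀t.le, le_rfl⟩).2.2⟩]

section Trajectory

variable {E U : Type*} [NormedAddCommGroup E] [NormedSpace ℝ E] [TopologicalSpace U]
  {v : E → U → E}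

theorem sub_eq_integral_fderiv_of_trajectory (hvc : Continuous fun q : E × U ↦ v q.1 q.2)
    {F : E → ℝ} (hF : ContDiff ℝ 1 F) {t₁ t₂ : ℝ} (ht : t₁ ≤ t₂) {x : ℝ → E} {u : ℝ → U}
    (hu : Continuous u) (hx : ∀ t ∈ Icc t₁ t₂, HasDerivAt x (v (x t) (u t)) t) :
    F (x t₂) - F (x t₁) = ∫ t in t₁..t₂, fderiv ℝ F (x t) (v (x t) (u t)) := by
  rw [← uIcc_of_le ht] at hx
  exact (integral_fderiv_apply_eq_sub hF hx
    (hvc.comp_continuousOn ((HasDerivAt.continuousOn hx).prodMk hu.continuousOn))).symm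

theorem le_of_forall_trajectory_integral_le [CompleteSpace E]
    (hvl : ∀ u, LocallyLipschitz fun x ↦ v x u) {a b : E → U → ℝ}
    (ha : Continuous fun q : E × U ↦ a q.1 q.2) (hb : Continuous fun q : E × U ↦ b q.1 q.2)
    (h : ∀ t₁ t₂ : ℝ, t₁ ≤ t₂ → ∀ (x : ℝ → E) (u : ℝ → U), Continuous u →
      (∀ t ∈ Icc t₁ t₂, HasDerivAt x (v (x t) (u t)) t) →
      ∫ t in t₁..t₂, a (x t) (u t) ≤ ∫ t in t₁..t₂, b (x t) (u t))
    (x₀ : E) (u₀ : U) : a x₀ u₀ ≤ b x₀ u₀ := by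
  obtain ⟨x, hx₀, ε, hε, hx⟩ := (hvl u₀).exists_eq_forall_mem_Ioo_hasDerivAt₀ x₀
  have hx' : ∀ t ∈ Icc 0 (ε / 2), HasDerivAt x (v (x t) u₀) t :=
    fun t ht ↦ hx t ⟨by linarith [ht.1], by linarith [ht.2]⟩
  have hxu : ContinuousOn (fun t ↦ (x t, u₀)) (Icc 0 (ε / 2)) :=
    (HasDerivAt.continuousOn hx').prodMk continuousOn_const
  simpa [hx₀] using le_of_forall_integral_le_integral (half_pos hε)
    (ha.comp_continuousOn hxu) (hb.comp_continuousOn hxu) fun t ht ↦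
      h 0 t ht.1.le x (fun _ ↦ u₀) continuous_const fun τ hτ ↦ hx' τ ⟨hτ.1, hτ.2.trans ht.2⟩

theorem forall_trajectory_sub_le_integral_iff [CompleteSpace E]
    (hvc : Continuous fun q : E × U ↦ v q.1 q.2) (hvl : ∀ u, LocallyLipschitz fun x ↦ v x u)
    {w : E → U → ℝ} (hw : Continuous fun q : E × U ↦ w q.1 q.2) {F : E → ℝ}
    (hF : ContDiff ℝ 1 F) :
    (∀ t₁ t₂ : ℝ, t₁ ≤ t₂ → ∀ (x : ℝ → E) (u : ℝ → U), Continuous u →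
      (∀ t ∈ Icc t₁ t₂, HasDerivAt x (v (x t) (u t)) t) →
      F (x t₂) - F (x t₁) ≤ ∫ t in t₁..t₂, w (x t) (u t)) ↔
    ∀ x u, fderiv ℝ F x (v x u) ≤ w x u := by
  have hg : Continuous fun q : E × U ↦ fderiv ℝ F q.1 (v q.1 q.2) :=
    (hF.continuous_fderiv_apply one_ne_zero).comp (continuous_fst.prodMk hvc)
  refine ⟨fun H ↦ le_of_forall_trajectory_integral_le hvl hg hw fun t₁ t₂ ht x u hu hx ↦ ?_,
    fun H t₁ t₂ ht x u hu hx ↦ ?_⟩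
  · rw [← sub_eq_integral_fderiv_of_trajectory hvc hF ht hu hx]
    exact H t₁ t₂ ht x u hu hx
  · have hxu : ContinuousOn (fun t ↦ (x t, u t)) (Icc t₁ t₂) :=
      (HasDerivAt.continuousOn hx).prodMk hu.continuousOn
    rw [sub_eq_integral_fderiv_of_trajectory hvc hF ht hu hx]
    exact intervalIntegral.integral_mono_on ht
      ((hg.comp_continuousOn hxu).intervalIntegrable_of_Icc ht)
      ((hw.comp_continuousOn hxu).intervalIntegrable_of_Icc ht) fun t _ ↦ H (x t) (u t)

theorem forall_trajectory_sub_eq_integral_iff [CompleteSpace E]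
    (hvc : Continuous fun q : E × U ↦ v q.1 q.2) (hvl : ∀ u, LocallyLipschitz fun x ↦ v x u)
    {w : E → U → ℝ} (hw : Continuous fun q : E × U ↦ w q.1 q.2) {F : E → ℝ}
    (hF : ContDiff ℝ 1 F) :
    (∀ t₁ t₂ : ℝ, t₁ ≤ t₂ → ∀ (x : ℝ → E) (u : ℝ → U), Continuous u →
      (∀ t ∈ Icc t₁ t₂, HasDerivAt x (v (x t) (u t)) t) →
      F (x t₂) - F (x t₁) = ∫ t in t₁..t₂, w (x t) (u t)) ↔
    ∀ x u, fderiv ℝ F x (v x u) = w x u := by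
  have hg : Continuous fun q : E × U ↦ fderiv ℝ F q.1 (v q.1 q.2) :=
    (hF.continuous_fderiv_apply one_ne_zero).comp (continuous_fst.prodMk hvc)
  refine ⟨fun H x₀ u₀ ↦ le_antisymm ?_ ?_, fun H t₁ t₂ ht x u hu hx ↦ ?_⟩
  · refine le_of_forall_trajectory_integral_le hvl (a := fun x u ↦ fderiv ℝ F x (v x u)) hg hw
      (fun t₁ t₂ ht x u hu hx ↦ ?_) x₀ u₀
    rw [← sub_eq_integral_fderiv_of_trajectory hvc hF ht hu hx, H t₁ t₂ ht x u hu hx]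
  · refine le_of_forall_trajectory_integral_le hvl (b := fun x u ↦ fderiv ℝ F x (v x u)) hw hg
      (fun t₁ t₂ ht x u hu hx ↦ ?_) x₀ u₀
    rw [← sub_eq_integral_fderiv_of_trajectory hvc hF ht hu hx, H t₁ t₂ ht x u hu hx]
  · rw [sub_eq_integral_fderiv_of_trajectory hvc hF ht hu hx]
    exact intervalIntegral.integral_congr fun t _ ↦ H (x t) (u t)

end Trajectory

/-- A C¹ function `F` satisfies the integral dissipation inequality along every smooth
trajectory of `ẋ = f(x,u)`, `y = h(x,u)` if and only if it satisfies the differential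
dissipation inequality `⟨∇F(x), f(x,u)⟩ ≤ s(u, h(x,u))` for all `(x,u)`; and the same
equivalence holds with both inequalities replaced by equalities. -/
theorem dissipation_inequality_iff_differential {n m k : ℕ}
    (f : (Fin n → ℝ) → (Fin m → ℝ) → (Fin n → ℝ))
    (h : (Fin n → ℝ) → (Fin m → ℝ) → (Fin k → ℝ))
    (s : (Fin m → ℝ) → (Fin k → ℝ) → ℝ)
    (hfc : Continuous fun q : (Fin n → ℝ) × (Fin m → ℝ) => f q.1 q.2)
    (hfl : ∀ u : Fin m → ℝ, LocallyLipschitz fun x => f x u)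
    (hhc : Continuous fun q : (Fin n → ℝ) × (Fin m → ℝ) => h q.1 q.2)
    (hsc : Continuous fun q : (Fin m → ℝ) × (Fin k → ℝ) => s q.1 q.2)
    (F : (Fin n → ℝ) → ℝ) (hF : ContDiff ℝ 1 F) :
    ((∀ (t₁ t₂ : ℝ), t₁ ≤ t₂ →
        ∀ (x : ℝ → Fin n → ℝ) (u : ℝ → Fin m → ℝ), Continuous u →
          (∀ t ∈ Set.Icc t₁ t₂, HasDerivAt x (f (x t) (u t)) t) →
          F (x t₂) - F (x t₁) ≤ ∫ t in t₁..t₂, s (u t) (h (x t) (u t))) ↔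
      (∀ (x : Fin n → ℝ) (u : Fin m → ℝ), fderiv ℝ F x (f x u) ≤ s u (h x u))) ∧
    ((∀ (t₁ t₂ : ℝ), t₁ ≤ t₂ →
        ∀ (x : ℝ → Fin n → ℝ) (u : ℝ → Fin m → ℝ), Continuous u →
          (∀ t ∈ Set.Icc t₁ t₂, HasDerivAt x (f (x t) (u t)) t) →
          F (x t₂) - F (x t₁) = ∫ t in t₁..t₂, s (u t) (h (x t) (u t))) ↔
      (∀ (x : Fin n → ℝ) (u : Fin m → ℝ), fderiv ℝ F x (f x u) = s u (h x u))) := by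
  have hw : Continuous fun q : (Fin n → ℝ) × (Fin m → ℝ) ↦ s q.2 (h q.1 q.2) :=
    hsc.comp (continuous_snd.prodMk hhc)
  exact ⟨forall_trajectory_sub_le_integral_iff hfc hfl (w := fun x u ↦ s u (h x u)) hw hF,
    forall_trajectory_sub_eq_integral_iff hfc hfl (w := fun x u ↦ s u (h x u)) hw hF⟩
end

section
/- For every γ ∈ ℝ^c one has γᵀ 𝕃 Exp(γ) ≥ 0, and γᵀ 𝕃 Exp(γ) = 0 if and only if Bᵀγ = 0. -/
/-!
Expanding `𝕃 = B 𝒦 Bᵀ` turns `γᵀ 𝕃 Exp(γ)` into `∑ⱼ κⱼ (Bᵀγ)ⱼ (Bᵀ Exp γ)ⱼ`. For an edge `j` from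
`i₋` to `i₊` the two factors are `γ i₊ - γ i₋` and `exp (γ i₊) - exp (γ i₋)`, which have the
same sign because `exp` is increasing, and vanish together because it is injective.
-/

open Matrix

section

variable {R : Type*} [Ring R] [LinearOrder R] [IsStrictOrderedRing R] {f : R → R}

theorem Monotone.sub_mul_sub_nonneg (hf : Monotone f) (a b : R) :
    0 ≤ (a - b) * (f a - f b) :=
  (monotone_id.monovary hf).sub_mul_sub_nonneg b a

theorem StrictMono.sub_mul_sub_eq_zero_iff (hf : StrictMono f) (a b : R) :
    (a - b) * (f a - f b) = 0 ↔ a = b := by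
  simp only [mul_eq_zero, sub_eq_zero, hf.injective.eq_iff, or_self]

end

section

variable {m n R : Type*} [Fintype m]

theorem dotProduct_mul_diagonal_mul_transpose_mulVec [Fintype n] [DecidableEq n]
    [CommSemiring R] (B : Matrix m n R) (κ : n → R) (x y : m → R) :
    x ⬝ᵥ ((B * diagonal κ * Bᵀ) *ᵥ y) = ∑ j, κ j * ((Bᵀ *ᵥ x) j * (Bᵀ *ᵥ y) j) := by
  rw [← mulVec_mulVec, ← mulVec_mulVec, dotProduct_mulVec, ← mulVec_transpose]
  simp only [dotProduct, mulVec_diagonal]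
  exact Finset.sum_congr rfl fun j _ => by ring

theorem transpose_mulVec_apply_eq_sub [Ring R] {B : Matrix m n R} {j : n} {ip im : m}
    (hne : ip ≠ im) (hp : B ip j = 1) (hm : B im j = -1)
    (h0 : ∀ i, i ≠ ip → i ≠ im → B i j = 0) (x : m → R) :
    (Bᵀ *ᵥ x) j = x ip - x im := by
  rw [mulVec, dotProduct, Fintype.sum_eq_add ip im hne fun i hi => by
    simp [h0 i hi.1 hi.2]]
  simp [hp, hm, sub_eq_add_neg]

end

/-- For the weighted Laplacian `𝕃 = B 𝒦 Bᵀ` of a directed graph (with `B` an incidence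
matrix and `𝒦` a positive diagonal matrix of conductances), one has
`γᵀ 𝕃 Exp(γ) ≥ 0` for all `γ`, with equality if and only if `Bᵀ γ = 0`. -/
theorem laplacian_exp_nonneg {c r : ℕ}
    (B : Matrix (Fin c) (Fin r) ℝ)
    (hB : ∀ j : Fin r, ∃ ip im : Fin c, ip ≠ im ∧ B ip j = 1 ∧ B im j = -1 ∧
      ∀ i : Fin c, i ≠ ip → i ≠ im → B i j = 0)
    (κ : Fin r → ℝ) (hκ : ∀ j, 0 < κ j)
    (γ : Fin c → ℝ) :
    0 ≤ γ ⬝ᵥ ((B * Matrix.diagonal κ * Bᵀ) *ᵥ fun i => Real.exp (γ i)) ∧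
    (γ ⬝ᵥ ((B * Matrix.diagonal κ * Bᵀ) *ᵥ fun i => Real.exp (γ i)) = 0 ↔
      Bᵀ *ᵥ γ = 0) := by
  have hedge : ∀ j, ∃ ip im : Fin c, (Bᵀ *ᵥ γ) j = γ ip - γ im ∧
      (Bᵀ *ᵥ fun i => Real.exp (γ i)) j = Real.exp (γ ip) - Real.exp (γ im) := by
    intro j
    obtain ⟨ip, im, hne, hp, hm, h0⟩ := hB j
    exact ⟨ip, im, transpose_mulVec_apply_eq_sub hne hp hm h0 _,
      transpose_mulVec_apply_eq_sub hne hp hm h0 _⟩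
  have hterm_nonneg : ∀ j, 0 ≤ κ j * ((Bᵀ *ᵥ γ) j * (Bᵀ *ᵥ fun i => Real.exp (γ i)) j) := by
    intro j
    obtain ⟨ip, im, hγ, hexp⟩ := hedge j
    rw [hγ, hexp]
    exact mul_nonneg (hκ j).le (Real.exp_monotone.sub_mul_sub_nonneg _ _)
  have hterm_eq_zero : ∀ j,
      κ j * ((Bᵀ *ᵥ γ) j * (Bᵀ *ᵥ fun i => Real.exp (γ i)) j) = 0 ↔ (Bᵀ *ᵥ γ) j = 0 := by
    intro j
    obtain ⟨ip, im, hγ, hexp⟩ := hedge j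
    rw [mul_eq_zero_iff_left (hκ j).ne', hγ, hexp,
      Real.exp_strictMono.sub_mul_sub_eq_zero_iff, sub_eq_zero]
  rw [dotProduct_mul_diagonal_mul_transpose_mulVec]
  refine ⟨Finset.sum_nonneg fun j _ => hterm_nonneg j, ?_⟩
  rw [Finset.sum_eq_zero_iff_of_nonneg fun j _ => hterm_nonneg j, funext_iff]
  simp only [Finset.mem_univ, true_implies, hterm_eq_zero, Pi.zero_apply]
end

section
/- Let f : ℝ^n → ℝ^n, g : ℝ^n → ℝ^{n×m}, h : ℝ^n → ℝ^m be continuous, H : ℝ^n → ℝ be C¹, and suppose the cyclo-passivity conditions hold: ∇H(x)ᵀ f(x) = −ρ(x) with ρ(x) ≥ 0 for all x, and ∇H(x)ᵀ g(x) = h(x)ᵀ for all x. Let U : ℝ → ℝ be C¹ with U'(S) > 0 for all S. Then along every differentiable solution (x(t), S(t)) of the extended system ẋ = f(x) + g(x)u, Ṡ = ρ(x)/U'(S) (with u : ℝ → ℝ^m continuous), the total energy E(x,S) := H(x) + U(S) satisfies d/dt E(x(t),S(t)) = h(x(t))ᵀ u(t) for all t (First Law: cyclo-losslessness with respect to the supply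 rate yᵀu with y = h(x)), and d/dt S(t) ≥ 0 for all t (Second Law). -/
open Matrix

/-! Along a solution the chain rule gives `d/dt H(x) = ∇Hᵀ(f + g u) = -ρ(x) + h(x)ᵀu`, while the
entropy equation is designed so that `d/dt U(S) = U'(S) · ρ(x)/U'(S) = ρ(x)`: the internal energy
absorbs exactly the dissipated power, so the total energy changes only by the supplied power.
Since `ρ ≥ 0` and the temperature `U'(S)` is positive, `Ṡ ≥ 0`. -/

theorem hasDerivAt_comp_solution_of_cycloPassive {n m : ℕ}
    {f : (Fin n → ℝ) → (Fin n → ℝ)} {g : (Fin n → ℝ) → Matrix (Fin n) (Fin m) ℝ}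
    {h : (Fin n → ℝ) → (Fin m → ℝ)} {H ρ : (Fin n → ℝ) → ℝ}
    {x : ℝ → Fin n → ℝ} {u : ℝ → Fin m → ℝ} {t : ℝ}
    (hH : DifferentiableAt ℝ H (x t))
    (hρf : fderiv ℝ H (x t) (f (x t)) = -ρ (x t))
    (hg : ∀ v, fderiv ℝ H (x t) (g (x t) *ᵥ v) = h (x t) ⬝ᵥ v)
    (hx : HasDerivAt x (f (x t) + g (x t) *ᵥ u t) t) :
    HasDerivAt (fun τ => H (x τ)) (-ρ (x t) + h (x t) ⬝ᵥ u t) t := by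
  have hchain := hH.hasFDerivAt.comp_hasDerivAt t hx
  rwa [map_add, hρf, hg] at hchain

theorem hasDerivAt_comp_of_hasDerivAt_div_deriv {U S : ℝ → ℝ} {r t : ℝ}
    (hU : DifferentiableAt ℝ U (S t)) (hU0 : deriv U (S t) ≠ 0)
    (hS : HasDerivAt S (r / deriv U (S t)) t) :
    HasDerivAt (fun τ => U (S τ)) r t := by
  have hchain := hU.hasDerivAt.comp t hS
  rwa [mul_div_cancel₀ r hU0] at hchain

theorem cycloPassive_extension_first_second_law_general {n m : ℕ}
    (f : (Fin n → ℝ) → (Fin n → ℝ))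
    (g : (Fin n → ℝ) → Matrix (Fin n) (Fin m) ℝ)
    (h : (Fin n → ℝ) → (Fin m → ℝ))
    (H : (Fin n → ℝ) → ℝ) (hH : ContDiff ℝ 1 H)
    (ρ : (Fin n → ℝ) → ℝ)
    (hρf : ∀ x, fderiv ℝ H x (f x) = -ρ x)
    (hρ0 : ∀ x, 0 ≤ ρ x)
    (hg : ∀ (x : Fin n → ℝ) (v : Fin m → ℝ), fderiv ℝ H x (g x *ᵥ v) = h x ⬝ᵥ v)
    (U : ℝ → ℝ) (hU : ContDiff ℝ 1 U) (hU' : ∀ S, 0 < deriv U S)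
    (x : ℝ → Fin n → ℝ) (S : ℝ → ℝ) (u : ℝ → Fin m → ℝ)
    (hx : ∀ t, HasDerivAt x (f (x t) + g (x t) *ᵥ u t) t)
    (hS : ∀ t, HasDerivAt S (ρ (x t) / deriv U (S t)) t) :
    (∀ t, HasDerivAt (fun τ => H (x τ) + U (S τ)) (h (x t) ⬝ᵥ u t) t) ∧
    (∀ t, 0 ≤ deriv S t) := by
  refine ⟨fun t => ?firstLaw, fun t => ?secondLaw⟩
  case firstLaw =>
    have hstorage := hasDerivAt_comp_solution_of_cycloPassive
      (hH.differentiable one_ne_zero _) (hρf _) (hg _) (hx t)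
    have hinternal := hasDerivAt_comp_of_hasDerivAt_div_deriv
      (hU.differentiable one_ne_zero _) (hU' _).ne' (hS t)
    exact (hstorage.add hinternal).congr_deriv (by ring)
  case secondLaw =>
    rw [(hS t).deriv]
    exact div_nonneg (hρ0 _) (hU' _).le

/-- A cyclo-passive input-state-output system `ẋ = f(x) + g(x)u`, `y = h(x)` with C¹
storage function `H` satisfying `∇Hᵀf = −ρ ≤ 0` and `∇Hᵀg = hᵀ`, extended with an
entropy variable `Ṡ = ρ(x)/U'(S)`, is cyclo-lossless for the total energy
`E(x,S) = H(x) + U(S)`: along every solution, `d/dt E = h(x)ᵀu` (First Law) and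
`d/dt S ≥ 0` (Second Law). -/
theorem cycloPassive_extension_first_second_law {n m : ℕ}
    (f : (Fin n → ℝ) → (Fin n → ℝ))
    (g : (Fin n → ℝ) → Matrix (Fin n) (Fin m) ℝ)
    (h : (Fin n → ℝ) → (Fin m → ℝ))
    (hfc : Continuous f) (hgc : Continuous g) (hhc : Continuous h)
    (H : (Fin n → ℝ) → ℝ) (hH : ContDiff ℝ 1 H)
    (ρ : (Fin n → ℝ) → ℝ)
    (hρf : ∀ x, fderiv ℝ H x (f x) = -ρ x)
    (hρ0 : ∀ x, 0 ≤ ρ x)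
    (hg : ∀ (x : Fin n → ℝ) (v : Fin m → ℝ), fderiv ℝ H x (g x *ᵥ v) = h x ⬝ᵥ v)
    (U : ℝ → ℝ) (hU : ContDiff ℝ 1 U) (hU' : ∀ S, 0 < deriv U S)
    (x : ℝ → Fin n → ℝ) (S : ℝ → ℝ) (u : ℝ → Fin m → ℝ) (huc : Continuous u)
    (hx : ∀ t, HasDerivAt x (f (x t) + g (x t) *ᵥ u t) t)
    (hS : ∀ t, HasDerivAt S (ρ (x t) / deriv U (S t)) t) :
    (∀ t, HasDerivAt (fun τ => H (x τ) + U (S τ)) (h (x t) ⬝ᵥ u t) t) ∧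
    (∀ t, 0 ≤ deriv S t) :=
  cycloPassive_extension_first_second_law_general f g h H hH ρ hρf hρ0 hg U hU hU' x S u hx hS
end
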